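/- Let V be a Gerstenhaber algebra over a field of characteristic 0. Define on V[ε] = V ⊕ εV (ε odd, ε² = 0) the product (а+εb)(c+εd) = ac + ε(bc + (−1)^{|a|} ad + (−1)^{|a|}[a,c]) and bracket [a+εb, c+εd] = [a,c] + ε([b,c] + (−1)^{|a|+1}[a,d]). Then V[ε] with these operations is again a Gerstenhaber algebra; in particular the deformed product is graded commutative and associative, and the Leibniz identity holds. -/

import Mathlib

/-!
A (graded) Gerstenhaber algebra is modeled as a ℚ-vector space `V` with a
grading `G : ℤ → Submodule ℚ V`, a bilinear product `mul` of degree `0` and a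
bilinear bracket `br` of degree `−1` (a Lie bracket on `V[1]`), satisfying the
Gerstenhaber axioms on homogeneous elements.  Its ε-deformation `V[ε]`
(`ε` odd, `ε² = 0`) is modeled by pairs `x = (a, b) = a + εb`; `x` is
homogeneous of degree `i` when `a ∈ G i` and `b ∈ G (i−1)`.  Since the
operations of `V[ε]` involve degree-dependent signs, they are given
degreewise: `pmul` and `pbr` take the degree `i` of the first argument.
`sgn k = (-1)^k`.
-/

/-- The sign `(-1)^k` for `k : ℤ`. -/
def sgn (k : ℤ) : ℤ := (-1) ^ k.natAbs

section
variable {V : Type*} [AddCommGroup V] [Module ℚ V]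


lemma sgn_even {n : ℤ} (h : Even n) : sgn n = 1 :=
  Even.neg_one_pow (Int.natAbs_even.mpr h)

lemma sgn_odd {n : ℤ} (h : ¬ Even n) : sgn n = -1 :=
  Odd.neg_one_pow (Int.natAbs_odd.mpr (Int.not_even_iff_odd.mp h))

/-- The deformed product `(a+εb)(c+εd) = ac + ε(bc + (−1)^{|a|}ad + (−1)^{|a|}[a,c])`
on `V[ε]`, for a first factor of degree `i`. -/
def pmul (mul br : V →ₗ[ℚ] V →ₗ[ℚ] V) (i : ℤ) (x y : V × V) : V × V :=
  (mul x.1 y.1,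
    mul x.2 y.1 + sgn i • mul x.1 y.2 + sgn i • br x.1 y.1)

/-- The deformed bracket `[a+εb, c+εd] = [a,c] + ε([b,c] + (−1)^{|a|+1}[a,d])`
on `V[ε]`, for a first argument of degree `i`. -/
def pbr (br : V →ₗ[ℚ] V →ₗ[ℚ] V) (i : ℤ) (x y : V × V) : V × V :=
  (br x.1 y.1, br x.2 y.1 + sgn (i + 1) • br x.1 y.2)

/-- A pair `a + εb` is homogeneous of degree `i` iff `a ∈ G i`, `b ∈ G (i-1)`. -/
def homog (G : ℤ → Submodule ℚ V) (i : ℤ) (x : V × V) : Prop :=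
  x.1 ∈ G i ∧ x.2 ∈ G (i - 1)

/-- right Leibniz rule -/
lemma RL (G : ℤ → Submodule ℚ V) (mul br : V →ₗ[ℚ] V →ₗ[ℚ] V)
    (hmulG : ∀ i j : ℤ, ∀ a ∈ G i, ∀ c ∈ G j, mul a c ∈ G (i + j))
    (hbrG : ∀ i j : ℤ, ∀ a ∈ G i, ∀ c ∈ G j, br a c ∈ G (i + j - 1))
    (hcomm : ∀ i j : ℤ, ∀ a ∈ G i, ∀ c ∈ G j, mul a c = sgn (i * j) • mul c a)
    (hanti : ∀ i j : ℤ, ∀ a ∈ G i, ∀ c ∈ G j,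
      br a c = -(sgn ((i - 1) * (j - 1)) • br c a))
    (hLeib : ∀ i j : ℤ, ∀ a ∈ G i, ∀ c ∈ G j, ∀ e : V,
      br a (mul c e) = mul (br a c) e + sgn ((i - 1) * j) • mul c (br a e))
    (i j k : ℤ) (a c e : V) (ha : a ∈ G i) (hc : c ∈ G j) (he : e ∈ G k) :
    br (mul a c) e = mul a (br c e) + sgn (i * j) • mul c (br a e) := by
  have h1 := hanti (i+j) k (mul a c) (hmulG i j a ha c hc) e he
  have h2 := hLeib k i e he a ha c
  have h3 := hanti k i e he a ha
  have h4 := hanti k j e he c hc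
  have h5 := hcomm (i+k-1) j (br a e) (hbrG i k a ha e he) c hc
  have h3' : mul (br e a) c = -(sgn ((k-1)*(i-1)) • mul (br a e) c) := by
    rw [h3]; simp
  have h4' : mul a (br e c) = -(sgn ((k-1)*(j-1)) • mul a (br c e)) := by
    rw [h4]; simp
  rw [h2, h3', h4', h5] at h1
  rcases Decidable.em (Even i) with hi|hi <;> rcases Decidable.em (Even j) with hj|hj <;>
    rcases Decidable.em (Even k) with hk|hk <;>
    linear_combination (norm := (simp [sgn_even, sgn_odd, parity_simps, ← Int.not_even_iff_odd, hi, hj, hk]; module)) h1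

/-- Jacobi in Leibniz form -/
lemma JL (G : ℤ → Submodule ℚ V) (br : V →ₗ[ℚ] V →ₗ[ℚ] V)
    (hbrG : ∀ i j : ℤ, ∀ a ∈ G i, ∀ c ∈ G j, br a c ∈ G (i + j - 1))
    (hanti : ∀ i j : ℤ, ∀ a ∈ G i, ∀ c ∈ G j,
      br a c = -(sgn ((i - 1) * (j - 1)) • br c a))
    (hjac : ∀ i j k : ℤ, ∀ a ∈ G i, ∀ c ∈ G j, ∀ e ∈ G k,
      sgn ((i - 1) * (k - 1)) • br (br a c) e
        + sgn ((j - 1) * (i - 1)) • br (br c e) a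
        + sgn ((k - 1) * (j - 1)) • br (br e a) c = 0)
    (i j k : ℤ) (a c e : V) (ha : a ∈ G i) (hc : c ∈ G j) (he : e ∈ G k) :
    br a (br c e) = br (br a c) e + sgn ((i-1)*(j-1)) • br c (br a e) := by
  have hJ := hjac i j k a ha c hc e he
  have hA := hanti i (j+k-1) a ha (br c e) (hbrG j k c hc e he)
  have hB := hanti k i e he a ha
  have hB2 : br (br e a) c = -(sgn ((k-1)*(i-1)) • br (br a e) c) := by rw [hB]; simp
  have hC := hanti (i+k-1) j (br a e) (hbrG i k a ha e he) c hc
  rcases Decidable.em (Even i) with hi|hi <;> rcases Decidable.em (Even j) with hj|hj <;>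
    rcases Decidable.em (Even k) with hk|hk <;>
    linear_combination (norm := (simp [sgn_even, sgn_odd, parity_simps, ← Int.not_even_iff_odd, hi, hj, hk]; module))
      hA - (sgn ((i-1)*(j+k-1-1)) * sgn ((j-1)*(i-1))) • hJ
        + (sgn ((i-1)*(j+k-1-1)) * sgn ((j-1)*(i-1)) * sgn ((k-1)*(j-1))) • hB2
        - (sgn ((i-1)*(j+k-1-1)) * sgn ((j-1)*(i-1)) * sgn ((k-1)*(j-1)) * sgn ((k-1)*(i-1))) • hC


set_option maxHeartbeats 1600000 in
/-- The ε-deformation `V[ε]` of a Gerstenhaber algebra `V` is again a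
Gerstenhaber algebra: the deformed product is graded commutative and
associative, the deformed bracket is a graded Lie bracket for the shifted
grading, and the Leibniz identity holds. -/
theorem epsilon_deformation_gerstenhaber
    (G : ℤ → Submodule ℚ V) (mul br : V →ₗ[ℚ] V →ₗ[ℚ] V)
    -- grading
    (hmulG : ∀ i j : ℤ, ∀ a ∈ G i, ∀ c ∈ G j, mul a c ∈ G (i + j))
    (hbrG : ∀ i j : ℤ, ∀ a ∈ G i, ∀ c ∈ G j, br a c ∈ G (i + j - 1))
    -- Gerstenhaber axioms for V
    (hcomm : ∀ i j : ℤ, ∀ a ∈ G i, ∀ c ∈ G j, mul a c = sgn (i * j) • mul c a)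
    (hassoc : ∀ a c e : V, mul (mul a c) e = mul a (mul c e))
    (hanti : ∀ i j : ℤ, ∀ a ∈ G i, ∀ c ∈ G j,
      br a c = -(sgn ((i - 1) * (j - 1)) • br c a))
    (hjac : ∀ i j k : ℤ, ∀ a ∈ G i, ∀ c ∈ G j, ∀ e ∈ G k,
      sgn ((i - 1) * (k - 1)) • br (br a c) e
        + sgn ((j - 1) * (i - 1)) • br (br c e) a
        + sgn ((k - 1) * (j - 1)) • br (br e a) c = 0)
    (hLeib : ∀ i j : ℤ, ∀ a ∈ G i, ∀ c ∈ G j, ∀ e : V,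
      br a (mul c e) = mul (br a c) e + sgn ((i - 1) * j) • mul c (br a e)) :
    ∀ i j k : ℤ, ∀ x y z : V × V,
      homog G i x → homog G j y → homog G k z →
      -- graded commutativity
      (pmul mul br i x y = sgn (i * j) • pmul mul br j y x) ∧
      -- associativity
      (pmul mul br (i + j) (pmul mul br i x y) z
        = pmul mul br i x (pmul mul br j y z)) ∧
      -- graded antisymmetry of the bracket (shifted grading)
      (pbr br i x y = -(sgn ((i - 1) * (j - 1)) • pbr br j y x)) ∧
      -- graded Jacobi identity (shifted grading)
      (sgn ((i - 1) * (k - 1)) • pbr br (i + j - 1) (pbr br i x y) z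
        + sgn ((j - 1) * (i - 1)) • pbr br (j + k - 1) (pbr br j y z) x
        + sgn ((k - 1) * (j - 1)) • pbr br (k + i - 1) (pbr br k z x) y = 0) ∧
      -- Leibniz identity
      (pbr br i x (pmul mul br j y z)
        = pmul mul br (i + j - 1) (pbr br i x y) z
          + sgn ((i - 1) * j) • pmul mul br j y (pbr br i x z)) := by
  intro i j k x y z hx hy hz
  obtain ⟨a, b⟩ := x
  obtain ⟨c, d⟩ := y
  obtain ⟨e, f⟩ := z
  obtain ⟨ha, hb⟩ := hx
  obtain ⟨hc, hd⟩ := hy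
  obtain ⟨he, hf⟩ := hz
  have hRL := RL G mul br hmulG hbrG hcomm hanti hLeib i j k a c e ha hc he
  have hJL := JL G br hbrG hanti hjac i j k a c e ha hc he
  refine ⟨?_, ?_, ?_, ?_, ?_⟩
  · -- commutativity
    simp only [pmul, map_add, map_zsmul, map_neg, LinearMap.add_apply, LinearMap.smul_apply,
      LinearMap.neg_apply, Prod.smul_mk, Prod.mk.injEq]
    refine ⟨hcomm i j a ha c hc, ?_⟩
    have h1 := hcomm (i-1) j b hb c hc
    have h2 := hcomm i (j-1) a ha d hd
    have h3 := hanti i j a ha c hc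
    rcases Decidable.em (Even i) with hi|hi <;> rcases Decidable.em (Even j) with hj|hj <;>
      linear_combination (norm := (simp [sgn_even, sgn_odd, parity_simps, ← Int.not_even_iff_odd, hi, hj]; module))
        h1 + sgn i • h2 + sgn i • h3
  · -- associativity
    simp only [pmul, map_add, map_zsmul, map_neg, LinearMap.add_apply, LinearMap.smul_apply,
      LinearMap.neg_apply, Prod.smul_mk, Prod.mk.injEq]
    refine ⟨hassoc a c e, ?_⟩
    have h1 := hassoc b c e
    have h2 := hassoc a d e
    have h3 := hassoc a c f
    have h4 := hLeib i j a ha c hc e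
    rcases Decidable.em (Even i) with hi|hi <;> rcases Decidable.em (Even j) with hj|hj <;>
      rcases Decidable.em (Even k) with hk|hk <;>
      linear_combination (norm := (simp [sgn_even, sgn_odd, parity_simps, ← Int.not_even_iff_odd, hi, hj, hk]; module))
        h1 + sgn i • h2 + sgn (i+j) • h3 + sgn (i+j) • hRL - sgn i • h4
  · -- antisymmetry
    simp only [pbr, map_add, map_zsmul, map_neg, LinearMap.add_apply, LinearMap.smul_apply,
      LinearMap.neg_apply, Prod.smul_mk, Prod.neg_mk, Prod.mk.injEq]
    refine ⟨hanti i j a ha c hc, ?_⟩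
    have h1 := hanti (i-1) j b hb c hc
    have h2 := hanti i (j-1) a ha d hd
    rcases Decidable.em (Even i) with hi|hi <;> rcases Decidable.em (Even j) with hj|hj <;>
      linear_combination (norm := (simp [sgn_even, sgn_odd, parity_simps, ← Int.not_even_iff_odd, hi, hj]; module))
        h1 + sgn (i+1) • h2
  · -- Jacobi
    simp only [pbr, map_add, map_zsmul, map_neg, LinearMap.add_apply, LinearMap.smul_apply,
      LinearMap.neg_apply, Prod.smul_mk, Prod.mk_add_mk, Prod.mk.injEq, Prod.mk_eq_zero,
      smul_add]
    refine ⟨hjac i j k a ha c hc e he, ?_⟩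
    have h1 := hjac (i-1) j k b hb c hc e he
    have h2 := hjac i (j-1) k a ha d hd e he
    have h3 := hjac i j (k-1) a ha c hc f hf
    rcases Decidable.em (Even i) with hi|hi <;> rcases Decidable.em (Even j) with hj|hj <;>
      rcases Decidable.em (Even k) with hk|hk <;>
      linear_combination (norm := (simp [sgn_even, sgn_odd, parity_simps, ← Int.not_even_iff_odd, hi, hj, hk]; module))
        sgn (k-1) • h1 + sgn (i+1) • h2 + sgn (j+1) • h3
  · -- Leibniz
    simp only [pbr, pmul, map_add, map_zsmul, map_neg, LinearMap.add_apply, LinearMap.smul_apply,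
      LinearMap.neg_apply, Prod.smul_mk, Prod.mk_add_mk, Prod.mk.injEq, smul_add]
    refine ⟨hLeib i j a ha c hc e, ?_⟩
    have h1 := hLeib (i-1) j b hb c hc e
    have h2 := hLeib i (j-1) a ha d hd e
    have h3 := hLeib i j a ha c hc f
    rcases Decidable.em (Even i) with hi|hi <;> rcases Decidable.em (Even j) with hj|hj <;>
      rcases Decidable.em (Even k) with hk|hk <;>
      linear_combination (norm := (simp [sgn_even, sgn_odd, parity_simps, ← Int.not_even_iff_odd, hi, hj, hk]; module))
        h1 + sgn (i+1) • h2 + (sgn (i+1) * sgn j) • h3 + (sgn (i+1) * sgn j) • hJL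
end
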